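/- Under the assumptions ‖x_S − x_G‖ ≤ M₁, ‖x_S − x_P‖ ≤ M₂, ‖x_S − x_D‖ ≥ M₃ > 0, k_G, k_D ≥ 0, α, β ≥ 0, and h = ‖x_S − x_P‖² − R_P² ≥ 0, the quantity b^H := ‖f‖² + (x_S − x_P)ᵀ J f + α(x_S − x_P)ᵀ f + β h/2, where f = k_G(x_G − x_S) + k_D(x_S − x_D)/‖x_S − x_D‖³ and J is the Jacobian of f with respect to x_S, satisfies b^H ≥ −(λ_M + α)(k_G M₁ M₂ + k_D M₂/M₃²), where λ_M is any upper bound on the operator norm of J. In particular, b^H is bounded below. -/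
import Mathlib


open scoped RealInnerProductSpace

theorem stmt11 (xS xD xG xP : EuclideanSpace ℝ (Fin 2))
    (kG kD α β M₁ M₂ M₃ RP lamM : ℝ)
    (hkG : 0 ≤ kG) (hkD : 0 ≤ kD) (hα : 0 ≤ α) (hβ : 0 ≤ β)
    (hM₁ : ‖xS - xG‖ ≤ M₁) (hM₂ : ‖xS - xP‖ ≤ M₂)
    (hM₃ : 0 < M₃) (hM₃' : M₃ ≤ ‖xS - xD‖)
    (hh : 0 ≤ ‖xS - xP‖ ^ 2 - RP ^ 2) :
    let F : EuclideanSpace ℝ (Fin 2) → EuclideanSpace ℝ (Fin 2) :=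
      fun y => kG • (xG - y) + (kD / ‖y - xD‖ ^ 3) • (y - xD)
    let J : EuclideanSpace ℝ (Fin 2) →L[ℝ] EuclideanSpace ℝ (Fin 2) := fderiv ℝ F xS
    ‖J‖ ≤ lamM →
    ‖F xS‖ ^ 2 + ⟪xS - xP, J (F xS)⟫ + α * ⟪xS - xP, F xS⟫
        + β * (‖xS - xP‖ ^ 2 - RP ^ 2) / 2
      ≥ -((lamM + α) * (kG * M₁ * M₂ + kD * M₂ / M₃ ^ 2)) := by
  intro F J hJ
  set f : EuclideanSpace ℝ (Fin 2) := F xS with hfdef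
  have hd : (0:ℝ) < ‖xS - xD‖ := lt_of_lt_of_le hM₃ hM₃'
  have hM₁0 : (0:ℝ) ≤ M₁ := le_trans (norm_nonneg _) hM₁
  have hM₂0 : (0:ℝ) ≤ M₂ := le_trans (norm_nonneg _) hM₂
  have hlam : (0:ℝ) ≤ lamM := le_trans (norm_nonneg J) hJ
  -- bound ‖f‖
  have hfb : ‖f‖ ≤ kG * M₁ + kD / M₃ ^ 2 := by
    have h1 : ‖f‖ ≤ ‖kG • (xG - xS)‖ + ‖(kD / ‖xS - xD‖ ^ 3) • (xS - xD)‖ :=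
      norm_add_le _ _
    have h2 : ‖kG • (xG - xS)‖ = kG * ‖xS - xG‖ := by
      rw [norm_smul, Real.norm_of_nonneg hkG, ← norm_neg, neg_sub]
    have h3 : ‖(kD / ‖xS - xD‖ ^ 3) • (xS - xD)‖ = kD / ‖xS - xD‖ ^ 2 := by
      rw [norm_smul, Real.norm_of_nonneg (by positivity)]
      field_simp
    have h4 : kD / ‖xS - xD‖ ^ 2 ≤ kD / M₃ ^ 2 := by
      apply div_le_div_of_nonneg_left hkD (by positivity)
      nlinarith
    have h5 : kG * ‖xS - xG‖ ≤ kG * M₁ := by nlinarith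
    calc ‖f‖ ≤ kG * ‖xS - xG‖ + kD / ‖xS - xD‖ ^ 2 := by rw [← h2, ← h3]; exact h1
    _ ≤ kG * M₁ + kD / M₃ ^ 2 := by linarith
  have hfn : (0:ℝ) ≤ ‖f‖ := norm_nonneg _
  -- inner product bounds
  have hi1 : ⟪xS - xP, J f⟫ ≥ -(M₂ * (lamM * ‖f‖)) := by
    have := abs_real_inner_le_norm (xS - xP) (J f)
    have hJf : ‖J f‖ ≤ lamM * ‖f‖ := le_trans (J.le_opNorm f) (by nlinarith)
    have h6 : ‖xS - xP‖ * ‖J f‖ ≤ M₂ * (lamM * ‖f‖) := by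
      nlinarith [norm_nonneg (xS - xP), norm_nonneg (J f)]
    have := neg_abs_le (⟪xS - xP, J f⟫)
    linarith [abs_real_inner_le_norm (xS - xP) (J f)]
  have hi2 : ⟪xS - xP, f⟫ ≥ -(M₂ * ‖f‖) := by
    have h6 : ‖xS - xP‖ * ‖f‖ ≤ M₂ * ‖f‖ := by nlinarith
    have := neg_abs_le (⟪xS - xP, f⟫)
    linarith [abs_real_inner_le_norm (xS - xP) f]
  have hsq : (0:ℝ) ≤ ‖f‖ ^ 2 := sq_nonneg _
  have hβh : (0:ℝ) ≤ β * (‖xS - xP‖ ^ 2 - RP ^ 2) / 2 := by positivity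
  have hi2' : α * ⟪xS - xP, f⟫ ≥ -(α * (M₂ * ‖f‖)) := by
    have := mul_le_mul_of_nonneg_left hi2 hα
    linarith
  have key : (lamM + α) * M₂ * ‖f‖ ≤ (lamM + α) * M₂ * (kG * M₁ + kD / M₃ ^ 2) :=
    mul_le_mul_of_nonneg_left hfb (by positivity)
  set a := ⟪xS - xP, J f⟫ with ha
  set b := ⟪xS - xP, f⟫ with hb
  set n := ‖f‖ with hn
  set c := ‖xS - xP‖ ^ 2 - RP ^ 2 with hc
  clear_value a b n c
  have e : (lamM + α) * M₂ * (kG * M₁ + kD / M₃ ^ 2)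
      = (lamM + α) * (kG * M₁ * M₂ + kD * M₂ / M₃ ^ 2) := by ring
  rw [e] at key
  linarith [key, hi1, hi2', hsq, hβh]
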